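/- Let f ∈ F_q[T] be a monic polynomial of degree n. Then f = A² + T·B² for some A, B ∈ F_q[T] if and only if every monic irreducible polynomial Q ∈ F_q[T] with χ_q(Q(0)) = −1 divides f with even multiplicity. -/

import Mathlib

/-!
Polynomials `A² + T B²` are the norms from `F[√-T]`, so they form a multiplicative monoid.
For monic irreducible `Q`, let `x` be the class of `T` in `K = F[T]/(Q)`; then
`N_{K/F}(-x) = Q(0)`, and over a finite field of odd characteristic an element is a square
exactly when its norm is. If `Q(0)` is a nonsquare, then `-x` is a nonsquare, so
`Q ∣ A² + T B²` forces `Q ∣ A` and `Q ∣ B`, and `Q` divides every such polynomial to an even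
power. If `Q(0)` is a square, then `-T ≡ s²` mod `Q`, and Thue's lemma produces `u² + T v²`,
nonzero of degree at most `deg Q` and divisible by `Q`, hence a square constant times `Q`.
-/

open Polynomial

theorem FiniteField.isSquare_norm_iff {K L : Type*} [Field K] [Field L] [Algebra K L] [Finite L]
    (hK : ringChar K ≠ 2) {x : L} : IsSquare (Algebra.norm K x) ↔ IsSquare x := by
  have := Finite.of_injective _ (algebraMap K L).injective
  have := Fintype.ofFinite K
  have := Fintype.ofFinite L
  rcases eq_or_ne x 0 with rfl | hx
  · simp
  have hL : ringChar L ≠ 2 := Algebra.ringChar_eq K L ▸ hK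
  -- Euler's criterion in `K` and in `L`, linked by `N x = x ^ ((|L| - 1) / (|K| - 1))`.
  have hexp : (Nat.card L - 1) / (Nat.card K - 1) * (Nat.card K / 2) = Nat.card L / 2 := by
    have hK1 := Finite.one_lt_card (α := K)
    have hK2 : Nat.card K % 2 = 1 := by
      have := (even_card_iff_char_two (F := K)).not.1 hK
      rw [Fintype.card_eq_nat_card] at this
      omega
    obtain ⟨e, he⟩ : Nat.card K - 1 ∣ Nat.card L - 1 := by
      simpa [← Fintype.card_eq_nat_card, Module.card_eq_pow_finrank (K := K) (V := L)] using
        Nat.sub_one_dvd_pow_sub_one (Fintype.card K) (Module.finrank K L)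
    have hcardL : Nat.card L = (Nat.card K - 1) * e + 1 := by
      have := Nat.card_pos (α := L)
      omega
    rw [he, Nat.mul_div_cancel_left _ (by omega), hcardL, show Nat.card K - 1 = 2 * (Nat.card K / 2)
      by omega, mul_assoc, mul_comm e]
    omega
  simp only [isSquare_iff hK (Algebra.norm_ne_zero_iff.2 hx), isSquare_iff hL hx,
    Fintype.card_eq_nat_card]
  rw [← hexp, pow_mul, ← (algebraMap K L).injective.eq_iff, map_pow, map_one,
    FiniteField.algebraMap_norm_eq_pow]

theorem AdjoinRoot.norm_neg_root {K : Type*} [Field K] {f : K[X]} (hf : f.Monic) :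
    Algebra.norm K (-root f) = f.eval 0 := by
  have := (powerBasis hf.ne_zero).finite
  have h_root : Algebra.norm K (root f) = (-1) ^ f.natDegree * f.eval 0 := by
    rw [← powerBasis_gen hf.ne_zero, Algebra.PowerBasis.norm_gen_eq_coeff_zero_minpoly,
      minpoly_powerBasis_gen_of_monic hf, powerBasis_dim, coeff_zero_eq_eval_zero]
  have h_neg_one : Algebra.norm K (-1 : AdjoinRoot f) = (-1) ^ f.natDegree := by
    rw [← map_one (algebraMap K _), ← map_neg, Algebra.norm_algebraMap,
      (powerBasis hf.ne_zero).finrank, powerBasis_dim]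
  rw [neg_eq_neg_one_mul, map_mul, h_root, h_neg_one, ← mul_assoc, ← mul_pow, neg_one_mul,
    neg_neg, one_pow, one_mul]

section

variable (R : Type*) [CommRing R]

def sqAddXMulSq : Submonoid R[X] where
  carrier := {f | ∃ a b : R[X], f = a ^ 2 + X * b ^ 2}
  mul_mem' := by
    rintro _ _ ⟨a, b, rfl⟩ ⟨c, d, rfl⟩
    exact ⟨a * c + X * b * d, a * d - b * c, by ring⟩
  one_mem' := ⟨1, 0, by ring⟩

variable {R}

theorem sq_add_X_mul_sq_mem_sqAddXMulSq (a b : R[X]) : a ^ 2 + X * b ^ 2 ∈ sqAddXMulSq R :=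
  ⟨a, b, rfl⟩

theorem sq_mem_sqAddXMulSq (a : R[X]) : a ^ 2 ∈ sqAddXMulSq R :=
  ⟨a, 0, by ring⟩

variable [IsDomain R]

theorem natDegree_sq_ne_natDegree_X_mul_sq (a : R[X]) {b : R[X]} (hb : b ≠ 0) :
    (a ^ 2).natDegree ≠ (X * b ^ 2).natDegree := by
  rw [natDegree_X_mul (pow_ne_zero 2 hb), natDegree_pow, natDegree_pow]
  omega

theorem sq_add_X_mul_sq_ne_zero {a b : R[X]} (h : a ≠ 0 ∨ b ≠ 0) : a ^ 2 + X * b ^ 2 ≠ 0 := by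
  rcases eq_or_ne b 0 with rfl | hb
  · simpa using h
  intro h0
  apply natDegree_sq_ne_natDegree_X_mul_sq a hb
  rw [eq_neg_of_add_eq_zero_left h0, natDegree_neg]

theorem isSquare_leadingCoeff_sq_add_X_mul_sq (a b : R[X]) :
    IsSquare (a ^ 2 + X * b ^ 2).leadingCoeff := by
  rcases eq_or_ne b 0 with rfl | hb
  · simpa [leadingCoeff_pow] using IsSquare.sq a.leadingCoeff
  rcases (natDegree_sq_ne_natDegree_X_mul_sq a hb).lt_or_gt with h | h
  · rw [leadingCoeff_add_of_degree_lt (degree_lt_degree h), leadingCoeff_mul, leadingCoeff_X,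
      one_mul, leadingCoeff_pow]
    exact IsSquare.sq _
  · rw [leadingCoeff_add_of_degree_lt' (degree_lt_degree h), leadingCoeff_pow]
    exact IsSquare.sq _

end

variable {F : Type*} [Field F]

theorem mem_sqAddXMulSq_of_dvd_of_natDegree_le {Q g : F[X]} (hQ : Q.Monic)
    (hg : g ∈ sqAddXMulSq F) (hg0 : g ≠ 0) (hQg : Q ∣ g) (hdeg : g.natDegree ≤ Q.natDegree) :
    Q ∈ sqAddXMulSq F := by
  obtain ⟨c, rfl⟩ := hQg
  have hc0 : c ≠ 0 := right_ne_zero_of_mul hg0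
  obtain ⟨c, rfl⟩ : ∃ c₀, C c₀ = c := by
    rw [natDegree_mul hQ.ne_zero hc0] at hdeg
    exact natDegree_eq_zero.1 (by omega)
  obtain ⟨e, he⟩ : IsSquare c := by
    obtain ⟨a, b, hab⟩ := hg
    have := isSquare_leadingCoeff_sq_add_X_mul_sq a b
    rwa [← hab, leadingCoeff_mul, hQ.leadingCoeff, one_mul, leadingCoeff_C] at this
  have he0 : e ≠ 0 := by
    rintro rfl
    exact hc0 (by simpa using he)
  have hQ_eq : Q = C e⁻¹ ^ 2 * (Q * C c) := by
    rw [he, ← C_pow, mul_left_comm, ← C_mul, inv_pow, sq, inv_mul_cancel₀ (mul_ne_zero he0 he0),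
      C_1, mul_one]
  rw [hQ_eq]
  exact mul_mem (sq_mem_sqAddXMulSq _) hg

/-- Thue's lemma: since `(d / 2 + 1) + (d + 1) / 2 > d = deg Q`, some nonzero `(u, v)` with
`deg u ≤ d / 2`, `deg v < (d + 1) / 2` has `u ≡ s v` mod `Q`; then `Q ∣ u² + X v²`, of degree at
most `d`. -/
theorem mem_sqAddXMulSq_of_dvd_sq_add_X {Q s : F[X]} (hQ : Q.Monic) (hs : Q ∣ s ^ 2 + X) :
    Q ∈ sqAddXMulSq F := by
  set d := Q.natDegree
  have := (AdjoinRoot.powerBasis hQ.ne_zero).finite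
  let ι : F[X] →ₗ[F] AdjoinRoot Q := (AdjoinRoot.mkₐ Q).toLinearMap
  let φ : degreeLT F (d / 2 + 1) × degreeLT F ((d + 1) / 2) →ₗ[F] AdjoinRoot Q :=
    LinearMap.coprod (ι ∘ₗ Submodule.subtype _)
      (-(LinearMap.mulLeft F (AdjoinRoot.mk Q s) ∘ₗ ι ∘ₗ Submodule.subtype _))
  have hrank : Module.finrank F (AdjoinRoot Q) < Module.finrank F
      (degreeLT F (d / 2 + 1) × degreeLT F ((d + 1) / 2)) := by
    rw [(AdjoinRoot.powerBasis hQ.ne_zero).finrank, AdjoinRoot.powerBasis_dim,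
      Module.finrank_prod, (degreeLTEquiv F _).finrank_eq, (degreeLTEquiv F _).finrank_eq,
      Module.finrank_fin_fun, Module.finrank_fin_fun]
    omega
  obtain ⟨⟨⟨u, hu⟩, ⟨v, hv⟩⟩, hker, hne⟩ :=
    Submodule.exists_mem_ne_zero_of_ne_bot (LinearMap.ker_ne_bot_of_finrank_lt (f := φ) hrank)
  have huv : Q ∣ u - s * v := by
    apply AdjoinRoot.mk_eq_zero.1
    simpa [φ, ι, sub_eq_add_neg] using hker
  have hQ_dvd : Q ∣ u ^ 2 + X * v ^ 2 := by
    rw [show u ^ 2 + X * v ^ 2 = (u - s * v) * (u + s * v) + v ^ 2 * (s ^ 2 + X) by ring]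
    exact dvd_add (huv.mul_right _) (hs.mul_left _)
  have hdeg : ∀ {p : F[X]} {n : ℕ}, p ∈ degreeLT F n → p ≠ 0 → p.natDegree < n :=
    fun hp hp0 => (natDegree_lt_iff_degree_lt hp0).2 (mem_degreeLT.1 hp)
  refine mem_sqAddXMulSq_of_dvd_of_natDegree_le hQ (sq_add_X_mul_sq_mem_sqAddXMulSq u v)
    (sq_add_X_mul_sq_ne_zero ?_)
    hQ_dvd (natDegree_add_le_of_degree_le ?_ ?_)
  · by_contra! h
    exact hne (by simp [h.1, h.2])
  · rcases eq_or_ne u 0 with rfl | hu0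
    · simp
    have := hdeg hu hu0
    grw [natDegree_pow_le]
    omega
  · rcases eq_or_ne v 0 with rfl | hv0
    · simp
    have := hdeg hv hv0
    rw [natDegree_X_mul (pow_ne_zero 2 hv0)]
    grw [natDegree_pow_le]
    omega

theorem dvd_and_dvd_of_dvd_sq_add_X_mul_sq {Q a b : F[X]} (hQ : Q.Monic) (hirr : Irreducible Q)
    (h0 : ¬IsSquare (Q.eval 0)) (h : Q ∣ a ^ 2 + X * b ^ 2) : Q ∣ a ∧ Q ∣ b := by
  have := Fact.mk hirr
  simp only [← AdjoinRoot.mk_eq_zero, map_add, map_mul, map_pow, AdjoinRoot.mk_X] at h ⊢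
  have hb : AdjoinRoot.mk Q b = 0 := by
    by_contra hb
    refine h0 (AdjoinRoot.norm_neg_root hQ ▸ IsSquare.map (Algebra.norm F)
      ⟨AdjoinRoot.mk Q a / AdjoinRoot.mk Q b, ?_⟩)
    field_simp
    linear_combination -h
  exact ⟨pow_eq_zero_iff two_ne_zero |>.1 (by simpa [hb] using h), hb⟩

theorem exists_mem_sqAddXMulSq_eq_sq_mul {Q f : F[X]} (hQ : Q.Monic) (hirr : Irreducible Q)
    (h0 : ¬IsSquare (Q.eval 0)) (hf : f ∈ sqAddXMulSq F) (hQf : Q ∣ f) :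
    ∃ g ∈ sqAddXMulSq F, f = Q ^ 2 * g := by
  obtain ⟨a, b, rfl⟩ := hf
  obtain ⟨⟨a, rfl⟩, ⟨b, rfl⟩⟩ := dvd_and_dvd_of_dvd_sq_add_X_mul_sq hQ hirr h0 hQf
  exact ⟨a ^ 2 + X * b ^ 2, sq_add_X_mul_sq_mem_sqAddXMulSq a b, by ring⟩

theorem even_multiplicity_of_mem_sqAddXMulSq {Q f : F[X]} (hQ : Q.Monic) (hirr : Irreducible Q)
    (h0 : ¬IsSquare (Q.eval 0)) (hf : f ∈ sqAddXMulSq F) (hf0 : f ≠ 0) :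
    Even (multiplicity Q f) := by
  obtain ⟨g, hfg, hg⟩ :=
    (FiniteMultiplicity.of_not_isUnit hirr.not_isUnit hf0).exists_eq_pow_mul_and_not_dvd
  rw [hfg] at hf
  clear hfg hf0
  generalize multiplicity Q f = k at hf ⊢
  induction k using Nat.twoStepInduction with
  | zero => exact .zero
  | one =>
    obtain ⟨g', -, hg'⟩ := exists_mem_sqAddXMulSq_eq_sq_mul hQ hirr h0 hf (by simp)
    exact absurd ⟨g', mul_left_cancel₀ hQ.ne_zero (by linear_combination hg')⟩ hg
  | more k ih =>
    obtain ⟨g', hg'_mem, hg'⟩ := exists_mem_sqAddXMulSq_eq_sq_mul hQ hirr h0 hf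
      (dvd_mul_of_dvd_left (dvd_pow_self Q (by omega)) g)
    have : g' = Q ^ k * g :=
      mul_left_cancel₀ (pow_ne_zero 2 hQ.ne_zero) (by linear_combination -hg')
    exact (ih (this ▸ hg'_mem)).add even_two

theorem mem_sqAddXMulSq_of_isSquare_eval_zero [Finite F] (hF : ringChar F ≠ 2) {Q : F[X]}
    (hQ : Q.Monic) (hirr : Irreducible Q) (h0 : IsSquare (Q.eval 0)) : Q ∈ sqAddXMulSq F := by
  have := Fact.mk hirr
  have := (AdjoinRoot.powerBasis hQ.ne_zero).finite
  have : Finite (AdjoinRoot Q) := Module.finite_of_finite F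
  obtain ⟨c, hc⟩ := (FiniteField.isSquare_norm_iff hF).1 (AdjoinRoot.norm_neg_root hQ ▸ h0)
  obtain ⟨s, rfl⟩ := AdjoinRoot.mk_surjective c
  refine mem_sqAddXMulSq_of_dvd_sq_add_X hQ (s := s) (AdjoinRoot.mk_eq_zero.1 ?_)
  rw [map_add, map_pow, AdjoinRoot.mk_X, sq, ← hc, neg_add_cancel]

open UniqueFactorizationMonoid in
theorem mem_sqAddXMulSq_of_even_multiplicity [Finite F] (hF : ringChar F ≠ 2) {f : F[X]}
    (hf : f.Monic)
    (h : ∀ Q : F[X], Q.Monic → Irreducible Q → ¬IsSquare (Q.eval 0) → Even (multiplicity Q f)) :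
    f ∈ sqAddXMulSq F := by
  classical
  rw [← hf.normalize_eq_self, ← prod_normalizedFactors_eq hf.ne_zero,
    Finset.prod_multiset_count]
  refine Submonoid.prod_mem _ fun Q hQ => ?_
  rw [Multiset.mem_toFinset] at hQ
  have hirr := irreducible_of_normalized_factor Q hQ
  have hQm : Q.Monic := normalize_normalized_factor Q hQ ▸ monic_normalize hirr.ne_zero
  by_cases h0 : IsSquare (Q.eval 0)
  · exact pow_mem (mem_sqAddXMulSq_of_isSquare_eval_zero hF hQm hirr h0) _
  obtain ⟨j, hj⟩ := h Q hQm hirr h0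
  have hcount : (normalizedFactors f).count Q = j + j := by
    rw [← hj, multiplicity_eq_count_normalizedFactors hirr hf.ne_zero,
      normalize_normalized_factor Q hQ]
  rw [hcount, ← two_mul, pow_mul']
  exact sq_mem_sqAddXMulSq _

theorem sum_of_squares_iff_even_multiplicity_general (F : Type) [Field F] [Fintype F] [DecidableEq F]
    (hq : Odd (Fintype.card F)) (f : F[X]) (hf : f.Monic) :
    (∃ A B : F[X], f = A ^ 2 + X * B ^ 2) ↔
      ∀ Q : F[X], Q.Monic → Irreducible Q → quadraticChar F (Q.eval 0) = -1 →
        Even (multiplicity Q f) := by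
  have hF : ringChar F ≠ 2 := fun h ↦ by
    have := FiniteField.even_card_iff_char_two.1 h
    rw [Nat.odd_iff] at hq
    omega
  simp only [quadraticChar_neg_one_iff_not_isSquare]
  exact ⟨fun h Q hQ hirr h0 ↦ even_multiplicity_of_mem_sqAddXMulSq hQ hirr h0 h hf.ne_zero,
    mem_sqAddXMulSq_of_even_multiplicity hF hf⟩

/-- Fermat-type theorem for `F_q[T]` (`q` odd): a monic `f` of degree `n` is of
the form `A² + T·B²` iff every monic irreducible `Q` with `χ_q(Q(0)) = -1`
divides `f` with even multiplicity. -/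
theorem sum_of_squares_iff_even_multiplicity (F : Type) [Field F] [Fintype F] [DecidableEq F]
    (hq : Odd (Fintype.card F)) (f : F[X]) (n : ℕ) (hf : f.Monic) (hdeg : f.natDegree = n) :
    (∃ A B : F[X], f = A ^ 2 + X * B ^ 2) ↔
      ∀ Q : F[X], Q.Monic → Irreducible Q → quadraticChar F (Q.eval 0) = -1 →
        Even (multiplicity Q f) :=
  sum_of_squares_iff_even_multiplicity_general F hq f hf
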